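/- arXiv:math-ph/0512095 — 2 statements merged into one kernel-verified Lean document; each statement's English description precedes it below -/
import Mathlib

section
/- For any real parameter Λ, the set B_n(Λ) of covectors e_i ± e_j (1 ≤ i < j ≤ n) together with Λe_i (1 ≤ i ≤ n) in ℝⁿ is a ∨-system. -/
open Matrix
open scoped Classical

/-- The Gram matrix `G^A = Σ_i A_i ⊗ A_i` of a finite family of covectors on `ℝⁿ`. -/
noncomputable def gram {n : ℕ} {ι : Type*} [Fintype ι] (A : ι → Fin n → ℝ) :
    Matrix (Fin n) (Fin n) ℝ := ∑ i, vecMulVec (A i) (A i)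

/-- The vector `α^∨` dual to the covector `α` via the Gram form `G^A`. -/
noncomputable def vee {n : ℕ} {ι : Type*} [Fintype ι] (A : ι → Fin n → ℝ)
    (α : Fin n → ℝ) : Fin n → ℝ := (gram A)⁻¹ *ᵥ α

/-- `A` is a ∨-system: a finite spanning family of covectors with non-degenerate Gram
form such that for every two-dimensional plane `Pl ⊂ V*` and every member `A_i ∈ Pl`,
the vector `Σ_{A_j ∈ Pl} A_j(A_i^∨) • A_j^∨` is proportional to `A_i^∨`. -/
def IsVeeSystem {n : ℕ} {ι : Type*} [Fintype ι] (A : ι → Fin n → ℝ) : Prop :=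
  Submodule.span ℝ (Set.range A) = ⊤ ∧ IsUnit (gram A) ∧
    ∀ Pl : Submodule ℝ (Fin n → ℝ), Module.finrank ℝ Pl = 2 →
      ∀ i, A i ∈ Pl → ∃ lam : ℝ,
        ∑ j ∈ Finset.univ.filter (fun j => A j ∈ Pl),
          (A j ⬝ᵥ vee A (A i)) • vee A (A j) = lam • vee A (A i)

/-- The family `B_n(Λ)`: covectors `e_i ± e_j` (`1 ≤ i < j ≤ n`) and `Λ e_i`
(`1 ≤ i ≤ n`) in `(ℝⁿ)*`. -/
def Bsystem (n : ℕ) (Λ : ℝ) :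
    ({p : Fin n × Fin n // p.1 < p.2} × Bool) ⊕ Fin n → Fin n → ℝ :=
  fun k => match k with
  | Sum.inl (p, b) => fun t =>
      (if t = p.1.1 then 1 else 0) + (if t = p.1.2 then (if b then 1 else -1) else 0)
  | Sum.inr i => fun t => if t = i then Λ else 0

/-!
The Gram form of `B_n(Λ)` is `(2n - 2 + Λ²)` times the identity, so `α^∨` is a multiple of `α`
and the ∨-condition for a plane `Π` says that every `α ∈ A ∩ Π` is an eigenvector of
`x ↦ Σ_{β ∈ A ∩ Π} (β ⬝ x) β`. The reflection `s_α` is a signed permutation of the coordinates,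
so it permutes `B_n(Λ)` up to sign; as it also preserves `Π`, it commutes with this operator,
which therefore maps `α` into the `-1`-eigenspace `ℝα` of `s_α`.
-/

open Finset Submodule

section Reflection

variable {m : Type*} [Fintype m] {α : m → ℝ}

lemma two_div_dotProduct_self_mul (hα : α ≠ 0) : (2 / (α ⬝ᵥ α)) * (α ⬝ᵥ α) = 2 :=
  div_mul_cancel₀ 2 (mt dotProduct_self_eq_zero.1 hα)

noncomputable def dotReflection (hα : α ≠ 0) : (m → ℝ) ≃ₗ[ℝ] (m → ℝ) :=
  Module.reflection (f := (2 / (α ⬝ᵥ α)) • dotProductBilin ℝ ℝ α)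
    (two_div_dotProduct_self_mul hα)

lemma dotReflection_apply (hα : α ≠ 0) (x : m → ℝ) :
    dotReflection hα x = x - ((2 / (α ⬝ᵥ α)) * (α ⬝ᵥ x)) • α := rfl

lemma dotReflection_self (hα : α ≠ 0) : dotReflection hα α = -α :=
  Module.reflection_apply_self _

lemma dotReflection_dotReflection (hα : α ≠ 0) (x : m → ℝ) :
    dotReflection hα (dotReflection hα x) = x :=
  Module.involutive_reflection _ x

lemma dotReflection_dotProduct (hα : α ≠ 0) (x y : m → ℝ) :
    dotReflection hα x ⬝ᵥ y = x ⬝ᵥ dotReflection hα y := by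
  simp only [dotReflection_apply, sub_dotProduct, dotProduct_sub, smul_dotProduct,
    dotProduct_smul, smul_eq_mul, dotProduct_comm α]
  ring

lemma dotReflection_mem (hα : α ≠ 0) {P : Submodule ℝ (m → ℝ)} (hαP : α ∈ P) {x : m → ℝ}
    (hx : x ∈ P) : dotReflection hα x ∈ P :=
  P.sub_mem hx (P.smul_mem _ hαP)

lemma mem_span_of_dotReflection_eq_neg (hα : α ≠ 0) {y : m → ℝ}
    (hy : dotReflection hα y = -y) : y ∈ span ℝ {α} := by
  rw [dotReflection_apply] at hy
  refine mem_span_singleton.2 ⟨(2 / (α ⬝ᵥ α)) * (α ⬝ᵥ y) / 2, ?_⟩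
  rw [div_eq_mul_inv, mul_comm, mul_smul]
  linear_combination (norm := module) (-(2:ℝ)⁻¹) • hy

end Reflection

section GramOn

variable {m ι : Type*} [Fintype m] [Fintype ι]

noncomputable def gramOn (A : ι → m → ℝ) (P : Submodule ℝ (m → ℝ)) (x : m → ℝ) : m → ℝ :=
  ∑ j ∈ univ.filter (fun j => A j ∈ P), (A j ⬝ᵥ x) • A j

lemma gramOn_map {A : ι → m → ℝ} {P : Submodule ℝ (m → ℝ)} (s : (m → ℝ) →ₗ[ℝ] (m → ℝ))
    (hs : ∀ x, s (s x) = x) (hsym : ∀ x y, s x ⬝ᵥ y = x ⬝ᵥ s y) (hP : ∀ x ∈ P, s x ∈ P)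
    (σ : Equiv.Perm ι) (hσ : ∀ j, A (σ j) = s (A j) ∨ A (σ j) = -s (A j)) (x : m → ℝ) :
    gramOn A P (s x) = s (gramOn A P x) := by
  have hsP : ∀ y, s y ∈ P ↔ y ∈ P := fun y => ⟨fun h => hs y ▸ hP _ h, hP y⟩
  have hσP : ∀ j, A j ∈ P ↔ A (σ j) ∈ P := fun j => by
    rcases hσ j with e | e <;> rw [e] <;> simp only [neg_mem_iff, hsP]
  have hterm : ∀ j, (A (σ j) ⬝ᵥ s x) • A (σ j) = (A j ⬝ᵥ x) • s (A j) := fun j => by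
    rcases hσ j with e | e <;> rw [e]
    · rw [hsym, hs]
    · rw [neg_dotProduct, neg_smul_neg, hsym, hs]
  rw [gramOn, gramOn, map_sum]
  refine (sum_equiv σ (fun j => by simpa only [mem_filter, mem_univ, true_and] using hσP j)
    fun j _ => ?_).symm
  rw [hterm, map_smul]

lemma gramOn_mem_span_of_dotReflection {A : ι → m → ℝ} {P : Submodule ℝ (m → ℝ)} {α : m → ℝ}
    (hα : α ≠ 0) (hαP : α ∈ P) (σ : Equiv.Perm ι)
    (hσ : ∀ j, A (σ j) = dotReflection hα (A j) ∨ A (σ j) = -dotReflection hα (A j)) :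
    gramOn A P α ∈ span ℝ {α} := by
  refine mem_span_of_dotReflection_eq_neg hα ?_
  have := gramOn_map (dotReflection hα).toLinearMap (dotReflection_dotReflection hα)
    (dotReflection_dotProduct hα) (fun _ => dotReflection_mem hα hαP) σ hσ α
  simp only [LinearEquiv.coe_coe, dotReflection_self] at this
  rw [← this]
  simp [gramOn]

end GramOn

section ScalarGram

variable {n : ℕ} {ι : Type*} [Fintype ι] {A : ι → Fin n → ℝ} {c : ℝ}

lemma gram_mul_inv_smul_one (hc : c ≠ 0) (hA : gram A = c • 1) : gram A * (c⁻¹ • 1) = 1 := by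
  rw [hA, smul_mul_smul, mul_inv_cancel₀ hc, one_mul, one_smul]

lemma vee_eq_inv_smul_of_gram_eq_smul (hc : c ≠ 0) (hA : gram A = c • 1) (x : Fin n → ℝ) :
    vee A x = c⁻¹ • x := by
  rw [vee, inv_eq_right_inv (gram_mul_inv_smul_one hc hA), smul_mulVec, one_mulVec]

theorem isVeeSystem_of_gram_eq_smul (hc : c ≠ 0) (hspan : span ℝ (Set.range A) = ⊤)
    (hA : gram A = c • 1)
    (hplane : ∀ P : Submodule ℝ (Fin n → ℝ), Module.finrank ℝ P = 2 →
      ∀ i, A i ∈ P → gramOn A P (A i) ∈ span ℝ {A i}) :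
    IsVeeSystem A := by
  refine ⟨hspan, IsUnit.of_mul_eq_one _ (gram_mul_inv_smul_one hc hA), fun P hP i hi => ?_⟩
  obtain ⟨μ, hμ⟩ := mem_span_singleton.1 (hplane P hP i hi)
  refine ⟨c⁻¹ * μ, ?_⟩
  simp only [vee_eq_inv_smul_of_gram_eq_smul hc hA, dotProduct_smul, smul_eq_mul, mul_smul]
  rw [← smul_sum, smul_comm μ]
  simp only [smul_comm _ c⁻¹ (A _), ← smul_sum]
  rw [← gramOn, ← hμ]

end ScalarGram

section SignedPerm

variable {m : Type*}

def signedPerm (π : Equiv.Perm m) (δ : m → ℝ) : (m → ℝ) →ₗ[ℝ] (m → ℝ) where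
  toFun x u := δ u * x (π.symm u)
  map_add' _ _ := funext fun _ => mul_add _ _ _
  map_smul' _ _ := funext fun _ => mul_left_comm _ _ _

lemma signedPerm_single [DecidableEq m] (π : Equiv.Perm m) (δ : m → ℝ) (a : m) (c : ℝ) :
    signedPerm π δ (Pi.single a c) = Pi.single (π a) (δ (π a) * c) := by
  funext u
  simp only [signedPerm, LinearMap.coe_mk, AddHom.coe_mk, Pi.single_apply,
    Equiv.symm_apply_eq]
  split_ifs with h <;> simp [h]

lemma signedPerm_injective {π : Equiv.Perm m} {δ : m → ℝ} (hδ : ∀ u, δ u ≠ 0) :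
    Function.Injective (signedPerm π δ) := fun x y h => funext fun a => by
  simpa [signedPerm, hδ] using congrFun h (π a)

end SignedPerm

lemma Fin.sum_subtype_lt_add {M : Type*} [AddCommMonoid M] {n : ℕ} (g : Fin n → M) :
    ∑ x : {p : Fin n × Fin n // p.1 < p.2}, (g x.1.1 + g x.1.2) = (n - 1) • ∑ a, g a := by
  rw [← Finset.sum_subtype (univ.filter fun p : Fin n × Fin n => p.1 < p.2) (by simp)
    fun p => g p.1 + g p.2, sum_filter, Fintype.sum_prod_type]
  simp only [ite_add_zero, sum_add_distrib]
  rw [sum_comm (f := fun a b => if a < b then g b else 0)]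
  simp only [← sum_filter, ← sum_add_distrib, smul_sum]
  refine sum_congr rfl fun a _ => ?_
  rw [filter_lt_eq_Ioi, filter_gt_eq_Iio, Finset.sum_const, Finset.sum_const, ← add_smul,
    Fin.card_Ioi, Fin.card_Iio]
  congr 1
  omega

namespace Bsystem

variable {n : ℕ}

def boolSign (b : Bool) : ℝ := if b then 1 else -1

lemma boolSign_eq_one_or (b : Bool) : boolSign b = 1 ∨ boolSign b = -1 := by
  cases b <;> simp [boolSign]

lemma boolSign_mul_self (b : Bool) : boolSign b * boolSign b = 1 := by
  cases b <;> norm_num [boolSign]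

lemma boolSign_ne_zero (b : Bool) : boolSign b ≠ 0 := by
  cases b <;> norm_num [boolSign]

noncomputable def longRoot (j : {p : Fin n × Fin n // p.1 < p.2} × Bool) : Fin n → ℝ :=
  Pi.single j.1.1.1 1 + Pi.single j.1.1.2 (boolSign j.2)

lemma inl_eq (Λ : ℝ) (j : {p : Fin n × Fin n // p.1 < p.2} × Bool) :
    Bsystem n Λ (.inl j) = longRoot j := by
  funext t
  simp [Bsystem, longRoot, boolSign, Pi.single_apply]

lemma inr_eq (Λ : ℝ) (a : Fin n) : Bsystem n Λ (.inr a) = Pi.single a Λ := by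
  funext t
  simp [Bsystem, Pi.single_apply]

lemma exists_longRoot_of_lt {u v : Fin n} (huv : u < v) {c d : ℝ} (hc : c = 1 ∨ c = -1)
    (hd : d = 1 ∨ d = -1) :
    ∃ j, longRoot j = Pi.single u c + Pi.single v d ∨
      longRoot j = -(Pi.single u c + Pi.single v d) := by
  rcases hc with rfl | rfl
  · rcases hd with rfl | rfl
    · exact ⟨(⟨(u, v), huv⟩, true), Or.inl (by simp [longRoot, boolSign])⟩
    · exact ⟨(⟨(u, v), huv⟩, false), Or.inl (by simp [longRoot, boolSign])⟩
  · rcases hd with rfl | rfl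
    · exact ⟨(⟨(u, v), huv⟩, false), Or.inr (by simp [longRoot, boolSign, Pi.single_neg, add_comm])⟩
    · exact ⟨(⟨(u, v), huv⟩, true), Or.inr (by simp [longRoot, boolSign, Pi.single_neg, add_comm])⟩

lemma exists_longRoot {u v : Fin n} (huv : u ≠ v) {c d : ℝ} (hc : c = 1 ∨ c = -1)
    (hd : d = 1 ∨ d = -1) :
    ∃ j, longRoot j = Pi.single u c + Pi.single v d ∨
      longRoot j = -(Pi.single u c + Pi.single v d) := by
  rcases huv.lt_or_gt with h | h
  · exact exists_longRoot_of_lt h hc hd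
  · obtain ⟨j, hj⟩ := exists_longRoot_of_lt h hd hc
    exact ⟨j, by rwa [add_comm (Pi.single v d : Fin n → ℝ)] at hj⟩

lemma longRoot_apply_of_ne {p q t : Fin n} (hpq : p < q) (b : Bool) (hp : t ≠ p) (hq : t ≠ q) :
    longRoot (⟨(p, q), hpq⟩, b) t = 0 := by
  simp [longRoot, hp, hq]

lemma longRoot_apply_fst {p q : Fin n} (hpq : p < q) (b : Bool) :
    longRoot (⟨(p, q), hpq⟩, b) p = 1 := by
  simp [longRoot, hpq.ne]

lemma longRoot_apply_snd {p q : Fin n} (hpq : p < q) (b : Bool) :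
    longRoot (⟨(p, q), hpq⟩, b) q = boolSign b := by
  simp [longRoot, hpq.ne']

lemma longRoot_injective_up_to_sign {j k : {p : Fin n × Fin n // p.1 < p.2} × Bool}
    (h : longRoot j = longRoot k ∨ longRoot j = -longRoot k) : j = k := by
  obtain ⟨⟨⟨p, q⟩, hpq⟩, b⟩ := j
  obtain ⟨⟨⟨p', q'⟩, hpq'⟩, b'⟩ := k
  dsimp only at hpq hpq'
  have hsupp : ∀ t, longRoot (⟨(p, q), hpq⟩, b) t ≠ 0 → t = p' ∨ t = q' := fun t ht => by
    by_contra! hne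
    rcases h with h | h <;> simp [h, longRoot_apply_of_ne hpq' b' hne.1 hne.2] at ht
  have hp := hsupp p (by simp [longRoot_apply_fst])
  have hq := hsupp q (by simp [longRoot_apply_snd, boolSign_ne_zero])
  obtain ⟨rfl, rfl⟩ : p = p' ∧ q = q' := by
    rcases hp with rfl | rfl <;> rcases hq with rfl | rfl
    exacts [absurd hpq (lt_irrefl _), ⟨rfl, rfl⟩, absurd hpq (lt_asymm hpq'),
      absurd hpq (lt_irrefl _)]
  rcases h with h | h <;> have h1 := congrFun h p <;> have h2 := congrFun h q <;>
    simp only [Pi.neg_apply, longRoot_apply_fst, longRoot_apply_snd] at h1 h2 <;>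
    revert h1 h2 <;> cases b <;> cases b' <;> norm_num [boolSign]

lemma longRoot_dotProduct {p q : Fin n} (hpq : p < q) (b : Bool) (x : Fin n → ℝ) :
    longRoot (⟨(p, q), hpq⟩, b) ⬝ᵥ x = x p + boolSign b * x q := by
  simp [longRoot, add_dotProduct, single_dotProduct]

lemma dotReflection_eq_signedPerm_of_eq_longRoot {α : Fin n → ℝ} (hα : α ≠ 0) {p q : Fin n}
    (hpq : p < q) (b : Bool) (e : α = longRoot (⟨(p, q), hpq⟩, b)) :
    ⇑(dotReflection hα) =
      signedPerm (Equiv.swap p q) (fun u => if u = p ∨ u = q then -boolSign b else 1) := by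
  subst e
  funext x
  rw [dotReflection_apply, longRoot_dotProduct, longRoot_dotProduct, longRoot_apply_fst,
    longRoot_apply_snd, boolSign_mul_self]
  funext u
  simp only [signedPerm, LinearMap.coe_mk, AddHom.coe_mk, Equiv.symm_swap, Pi.sub_apply,
    Pi.smul_apply, smul_eq_mul, longRoot, Pi.add_apply, Pi.single_apply]
  rcases eq_or_ne u p with rfl | hp
  · simp [hpq.ne]
    ring
  rcases eq_or_ne u q with rfl | hq
  · simp [hpq.ne']
    linear_combination (-x u) * boolSign_mul_self b
  · simp [hp, hq, Equiv.swap_apply_of_ne_of_ne hp hq]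

lemma dotReflection_eq_signedPerm_of_eq_single {α : Fin n → ℝ} (hα : α ≠ 0) {a : Fin n} {c : ℝ}
    (e : α = Pi.single a c) :
    ⇑(dotReflection hα) = signedPerm (Equiv.refl _) (fun u => if u = a then -1 else 1) := by
  subst e
  funext x u
  have hc : c ≠ 0 := by rintro rfl; simp at hα
  rcases eq_or_ne u a with rfl | hu
  · simp [dotReflection_apply, signedPerm]
    field_simp
    ring
  · simp [dotReflection_apply, signedPerm, hu]

lemma exists_perm_signedPerm (Λ : ℝ) (π : Equiv.Perm (Fin n)) {δ : Fin n → ℝ}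
    (hδ : ∀ u, δ u = 1 ∨ δ u = -1) :
    ∃ σ : Equiv.Perm _, ∀ j, Bsystem n Λ (σ j) = signedPerm π δ (Bsystem n Λ j) ∨
      Bsystem n Λ (σ j) = -signedPerm π δ (Bsystem n Λ j) := by
  have hlong : ∀ j, ∃ k, longRoot k = signedPerm π δ (longRoot j) ∨
      longRoot k = -signedPerm π δ (longRoot j) := by
    rintro ⟨⟨⟨p, q⟩, hpq⟩, b⟩
    simp only [longRoot, map_add, signedPerm_single, mul_one]
    refine exists_longRoot (π.injective.ne hpq.ne) (hδ _) ?_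
    rcases hδ (π q) with h | h <;> rcases boolSign_eq_one_or b with hb | hb <;> simp [h, hb]
  choose τ hτ using hlong
  have hτ_inj : Function.Injective τ := fun j k hjk => by
    have hW := signedPerm_injective (π := π) (δ := δ) fun u => by
      rcases hδ u with h | h <;> simp [h]
    refine longRoot_injective_up_to_sign ?_
    rcases hτ j with h₁ | h₁ <;> rcases hτ k with h₂ | h₂ <;> rw [hjk, h₂] at h₁
    exacts [Or.inl (hW h₁.symm), Or.inr (hW (by rw [map_neg, ← h₁])),
      Or.inr (hW (by rw [map_neg, h₁, neg_neg])), Or.inl (hW (neg_injective h₁.symm))]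
  refine ⟨Equiv.sumCongr (Equiv.ofBijective τ hτ_inj.bijective_of_finite) π, ?_⟩
  rintro (j | a)
  · simpa [inl_eq] using hτ j
  · rcases hδ (π a) with h | h <;> simp [inr_eq, signedPerm_single, h, Pi.single_neg]

lemma exists_perm_dotReflection {Λ : ℝ} {i} (hi : Bsystem n Λ i ≠ 0) :
    ∃ σ : Equiv.Perm _, ∀ j, Bsystem n Λ (σ j) = dotReflection hi (Bsystem n Λ j) ∨
      Bsystem n Λ (σ j) = -dotReflection hi (Bsystem n Λ j) := by
  rcases i with ⟨⟨⟨p, q⟩, hpq⟩, b⟩ | a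
  · obtain ⟨σ, hσ⟩ := exists_perm_signedPerm Λ (Equiv.swap p q)
      (δ := fun u => if u = p ∨ u = q then -boolSign b else 1)
      (fun u => by split_ifs <;> rcases boolSign_eq_one_or b with h | h <;> simp [h])
    rw [dotReflection_eq_signedPerm_of_eq_longRoot hi hpq b (inl_eq Λ _)]
    exact ⟨σ, hσ⟩
  · obtain ⟨σ, hσ⟩ := exists_perm_signedPerm Λ (Equiv.refl _)
      (δ := fun u => if u = a then -1 else 1) (fun u => by split_ifs <;> simp)
    rw [dotReflection_eq_signedPerm_of_eq_single hi (inr_eq Λ a)]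
    exact ⟨σ, hσ⟩

lemma gram_eq (Λ : ℝ) : gram (Bsystem n Λ) = (2 * (n - 1 : ℕ) + Λ ^ 2 : ℝ) • 1 := by
  ext s t
  let g : Fin n → ℝ := fun r => if s = r ∧ t = r then 2 else 0
  -- the cross terms of `e_p + e_q` and `e_p - e_q` cancel
  have hlong : ∀ x, ∑ b, longRoot (x, b) s * longRoot (x, b) t = g x.1.1 + g x.1.2 := by
    rintro ⟨⟨p, q⟩, hpq⟩
    simp only [g, longRoot, Fintype.sum_bool, Pi.add_apply, boolSign, Pi.single_apply]
    have := hpq.ne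
    split_ifs <;> simp_all <;> norm_num
  have hg : ∑ r, g r = 2 * (1 : Matrix (Fin n) (Fin n) ℝ) s t := by
    rcases eq_or_ne s t with rfl | h
    · simp [g]
    · rw [Matrix.one_apply_ne h, mul_zero]
      exact sum_eq_zero fun r _ => if_neg fun hr => h (hr.1.trans hr.2.symm)
  have hshort : ∑ a, (Pi.single a Λ : Fin n → ℝ) s * (Pi.single a Λ : Fin n → ℝ) t =
      Λ ^ 2 * (1 : Matrix (Fin n) (Fin n) ℝ) s t := by
    rcases eq_or_ne s t with rfl | h
    · simp [Pi.single_apply, sq]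
    · simp [Pi.single_apply, h, Matrix.one_apply_ne h]
  simp only [_root_.gram, Matrix.sum_apply, vecMulVec_apply, Fintype.sum_sum_type,
    Fintype.sum_prod_type, inl_eq, inr_eq, hlong, Fin.sum_subtype_lt_add, hg, hshort,
    Matrix.smul_apply, smul_eq_mul, nsmul_eq_mul]
  ring

lemma span_eq_top (hn : 2 ≤ n) (Λ : ℝ) : span ℝ (Set.range (Bsystem n Λ)) = ⊤ := by
  have : Nontrivial (Fin n) := Fin.nontrivial_iff_two_le.2 hn
  have hsingle : ∀ a, Pi.single a (1 : ℝ) ∈ span ℝ (Set.range (Bsystem n Λ)) := fun a => by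
    obtain ⟨b, hb⟩ := exists_ne a
    have hmem : ∀ d : ℝ, (d = 1 ∨ d = -1) →
        Pi.single a 1 + Pi.single b d ∈ span ℝ (Set.range (Bsystem n Λ)) := fun d hd => by
      obtain ⟨j, hj | hj⟩ := exists_longRoot hb.symm (Or.inl rfl) hd
      · rw [← hj, ← inl_eq Λ]
        exact subset_span ⟨_, rfl⟩
      · rw [← neg_neg (_ + _), ← hj, ← inl_eq Λ]
        exact neg_mem (subset_span ⟨_, rfl⟩)
    convert smul_mem _ (1 / 2 : ℝ) (add_mem (hmem 1 (Or.inl rfl)) (hmem (-1) (Or.inr rfl)))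
      using 1
    rw [Pi.single_neg]
    module
  rw [eq_top_iff, ← (Pi.basisFun ℝ (Fin n)).span_eq, span_le]
  rintro _ ⟨a, rfl⟩
  simpa using hsingle a

end Bsystem

/-- for any real parameter `Λ`, the set `B_n(Λ)` of covectors `e_i ± e_j`
(`1 ≤ i < j ≤ n`) together with `Λ e_i` (`1 ≤ i ≤ n`) in `ℝⁿ` is a ∨-system. -/
theorem Bsystem_isVeeSystem (n : ℕ) (hn : 2 ≤ n) (Λ : ℝ) :
    IsVeeSystem (Bsystem n Λ) := by
  have hc : (2 * (n - 1 : ℕ) + Λ ^ 2 : ℝ) ≠ 0 := by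
    have : (1 : ℝ) ≤ (n - 1 : ℕ) := by exact_mod_cast (by omega : 1 ≤ n - 1)
    positivity
  refine isVeeSystem_of_gram_eq_smul hc (Bsystem.span_eq_top hn Λ) (Bsystem.gram_eq Λ)
    fun P _ i hi => ?_
  by_cases h0 : Bsystem n Λ i = 0
  · simp [h0, gramOn]
  · obtain ⟨σ, hσ⟩ := Bsystem.exists_perm_dotReflection h0
    exact gramOn_mem_span_of_dotReflection h0 hi σ hσ
end

section
/- For n ≥ 7, the set {e_i ± e_j (1 ≤ i < j ≤ n), Λe_i, M(e_1 ± e_2 ± … ± e_n)} in ℝⁿ is a ∨-system only if M = 0. In particular for n = 7, the covectors M(e_1+e_2+e_3+e_4+e_5+e_6+e_7) and M(e_1+e_2+e_3−e_4−e_5−e_6−e_7) are the only elements of the set in their common 2-plane, so the ∨-condition forces them to be G-orthogonal, which gives M = 0. -/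
open Matrix
open scoped Classical

/-- The `Fₙ`-type family: covectors `e_i ± e_j` (`1 ≤ i < j ≤ n`), `Λ e_i`
(`1 ≤ i ≤ n`), and `M(e_1 ± e_2 ± ⋯ ± e_n)` (all sign choices, taken up to overall
sign by fixing the sign of `e_1` to be `+`). -/
def Fnsystem (n : ℕ) (h : 0 < n) (Λ M : ℝ) :
    (({p : Fin n × Fin n // p.1 < p.2} × Bool) ⊕ Fin n ⊕
      {ε : Fin n → Bool // ε ⟨0, h⟩ = true}) → Fin n → ℝ :=
  fun k => match k with
  | Sum.inl (p, b) => fun t =>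
      (if t = p.1.1 then 1 else 0) + (if t = p.1.2 then (if b then 1 else -1) else 0)
  | Sum.inr (Sum.inl i) => fun t => if t = i then Λ else 0
  | Sum.inr (Sum.inr ε) => fun t => M * (if ε.1 t then 1 else -1)

/-!
By the `B_n`-symmetry of `Fₙ`, its Gram form is `c • 1` with `c = 2(n - 1) + Λ² + 2ⁿ⁻¹M²`, so
`γ^∨ = c⁻¹ γ` for every covector `γ`. Take `α = M(1, …, 1)` and `β = M(1, 1, 1, -1, …, -1)`.
Every vector of their span is constant on the coordinate blocks `{1, 2, 3}` and `{4, …, n}`; for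
`n ≥ 6` no root `e_i ± e_j` and no nonzero `Λ e_i` is, and among the sign covectors only `α` and
`β` are. So if `M ≠ 0`, the ∨-condition on this plane forces `(α, β) = 0`, whereas
`(α, β) = (6 - n) M² ≠ 0` for `n ≥ 7`.
-/

theorem gram_apply_eq_sum {n : ℕ} {ι : Type*} [Fintype ι] (A : ι → Fin n → ℝ) (s t : Fin n) :
    _root_.gram A s t = ∑ i, A i s * A i t := by
  simp [_root_.gram, Matrix.sum_apply, vecMulVec_apply]

theorem gram_mulVec_vee {n : ℕ} {ι : Type*} [Fintype ι] {A : ι → Fin n → ℝ}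
    (hA : IsUnit (_root_.gram A)) (x : Fin n → ℝ) : _root_.gram A *ᵥ vee A x = x := by
  rw [vee, mulVec_mulVec, mul_nonsing_inv _ ((isUnit_iff_isUnit_det _).mp hA), one_mulVec]

theorem vee_eq_inv_smul {n : ℕ} {ι : Type*} [Fintype ι] {A : ι → Fin n → ℝ} {c : ℝ}
    (hA : _root_.gram A = c • 1) (hc : c ≠ 0) (x : Fin n → ℝ) : vee A x = c⁻¹ • x := by
  rw [vee, hA, inv_eq_left_inv (B := c⁻¹ • 1) (by simp [hc]), smul_mulVec, one_mulVec]

theorem IsVeeSystem.dotProduct_vee_eq_zero {n : ℕ} {ι : Type*} [Fintype ι]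
    {A : ι → Fin n → ℝ} (hA : IsVeeSystem A) {i j : ι} (hij : LinearIndependent ℝ ![A i, A j])
    (hplane : ∀ k, A k ∈ Submodule.span ℝ {A i, A j} → k = i ∨ k = j ∨ A k = 0) :
    A j ⬝ᵥ vee A (A i) = 0 := by
  obtain ⟨-, hG, hvee⟩ := hA
  have hrank : Module.finrank ℝ (Submodule.span ℝ {A i, A j}) = 2 := by
    rw [← Matrix.range_cons_cons_empty _ _ ![], finrank_span_eq_card hij, Fintype.card_fin]
  have hne : i ≠ j := by
    rintro rfl
    exact absurd (hij.injective (a₁ := 0) (a₂ := 1) rfl) (by decide)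
  have hi : A i ∈ Submodule.span ℝ {A i, A j} := Submodule.subset_span (by simp)
  have hj : A j ∈ Submodule.span ℝ {A i, A j} := Submodule.subset_span (by simp)
  obtain ⟨lam, hlam⟩ := hvee _ hrank i hi
  have key : (A i ⬝ᵥ vee A (A i)) • A i + (A j ⬝ᵥ vee A (A i)) • A j = lam • A i := by
    have := congrArg (_root_.gram A *ᵥ ·) hlam
    simp only [mulVec_sum, mulVec_smul, gram_mulVec_vee hG] at this
    rwa [Finset.sum_eq_add_of_mem i j (by simpa) (by simpa) hne fun k hk hkij => ?_] at this
    rcases hplane k (Finset.mem_filter.mp hk).2 with rfl | rfl | h0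
    · exact absurd rfl hkij.1
    · exact absurd rfl hkij.2
    · simp [h0]
  refine (LinearIndependent.pair_iff.mp hij (A i ⬝ᵥ vee A (A i) - lam) _ ?_).2
  rw [sub_smul, ← key]
  abel

theorem card_fun_bool_apply_eq_true {n : ℕ} (z : Fin n) :
    Fintype.card {ε : Fin n → Bool // ε z = true} = 2 ^ (n - 1) := by
  rw [Fintype.card_subtype, ← Fintype.piFinset_univ,
    Fintype.card_filter_piFinset_const_eq_of_mem _ _ (Finset.mem_univ true)]
  simp

theorem sum_pairs_lt_ite_eq_add_ite_eq {n : ℕ} (s : Fin n) :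
    ∑ p : {p : Fin n × Fin n // p.1 < p.2},
      ((if s = p.1.1 then (1:ℝ) else 0) + (if s = p.1.2 then 1 else 0)) = n - 1 := by
  rw [← Finset.sum_subtype (Finset.univ.filter fun p : Fin n × Fin n => p.1 < p.2) (by simp)
    (fun p => (if s = p.1 then (1:ℝ) else 0) + (if s = p.2 then 1 else 0)),
    Finset.sum_filter, Fintype.sum_prod_type]
  have hterm : ∀ q r : Fin n,
      (if q < r then (if s = q then (1:ℝ) else 0) + (if s = r then 1 else 0) else 0) =
        (if q = s then (if s < r then 1 else 0) else 0) +
          (if r = s then (if q < s then 1 else 0) else 0) := by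
    intro q r; split_ifs <;> grind
  simp only [hterm, Finset.sum_add_distrib, Finset.sum_ite_irrel, Finset.sum_const_zero,
    Finset.sum_ite_eq', Finset.mem_univ, if_true, Finset.sum_boole, Finset.filter_lt_eq_Ioi,
    Finset.filter_gt_eq_Iio, Fin.card_Ioi, Fin.card_Iio]
  have hs := s.isLt
  rw [Nat.cast_sub (by omega), Nat.cast_sub (by omega)]
  ring

theorem sum_sign_mul_sign_of_ne {n : ℕ} {z s t : Fin n} (hs : s ≠ z) (hst : s ≠ t) :
    ∑ ε : {ε : Fin n → Bool // ε z = true},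
      (if ε.1 s then (1:ℝ) else -1) * (if ε.1 t then 1 else -1) = 0 := by
  let flip : {ε : Fin n → Bool // ε z = true} → {ε : Fin n → Bool // ε z = true} :=
    fun ε => ⟨Function.update ε.1 s (!ε.1 s), by rw [Function.update_of_ne hs.symm]; exact ε.2⟩
  have hflip : Function.Involutive flip := fun ε => Subtype.ext (by simp [flip])
  -- flipping the sign of `ε s` negates every term
  have hsum := Fintype.sum_equiv (hflip.toPerm flip)
    (fun ε => (if ε.1 s then (1:ℝ) else -1) * (if ε.1 t then 1 else -1))
    (fun ε => -((if ε.1 s then (1:ℝ) else -1) * (if ε.1 t then 1 else -1))) fun ε => by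
      simp only [Function.Involutive.coe_toPerm, flip, Function.update_self,
        Function.update_of_ne hst.symm]
      cases ε.1 s <;> cases ε.1 t <;> norm_num
  rw [Finset.sum_neg_distrib] at hsum
  linarith

theorem sum_sign_mul_sign {n : ℕ} (z s t : Fin n) :
    ∑ ε : {ε : Fin n → Bool // ε z = true},
      (if ε.1 s then (1:ℝ) else -1) * (if ε.1 t then 1 else -1) =
    if s = t then 2 ^ (n - 1) else 0 := by
  split_ifs with hst
  · subst hst
    have hone : ∀ b : Bool, (if b then (1:ℝ) else -1) * (if b then 1 else -1) = 1 := by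
      intro b; cases b <;> norm_num
    simp only [hone, Finset.sum_const, Finset.card_univ, card_fun_bool_apply_eq_true, nsmul_eq_mul,
      mul_one, Nat.cast_pow, Nat.cast_ofNat]
  · by_cases hs : s = z
    · rw [Finset.sum_congr rfl fun ε _ => mul_comm _ _]
      exact sum_sign_mul_sign_of_ne (hs ▸ Ne.symm hst) (Ne.symm hst)
    · exact sum_sign_mul_sign_of_ne hs hst

theorem exists_lt_three_iff_ne_ne {n : ℕ} (hn : 6 ≤ n) (u v : Fin n) :
    ∃ w : Fin n, (w.1 < 3 ↔ u.1 < 3) ∧ w ≠ u ∧ w ≠ v := by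
  by_contra! H
  obtain ⟨b, hb⟩ : ∃ b, b + 3 ≤ n ∧ (b < 3 ↔ u.1 < 3) ∧ (b = 0 ∨ b = 3) :=
    if hu : u.1 < 3 then ⟨0, by omega⟩ else ⟨3, by omega⟩
  have h0 := H ⟨b, by omega⟩ (by simp; omega)
  have h1 := H ⟨b + 1, by omega⟩ (by simp; omega)
  have h2 := H ⟨b + 2, by omega⟩ (by simp; omega)
  simp only [ne_eq, Fin.ext_iff] at h0 h1 h2
  omega

theorem sum_ite_lt_three {n : ℕ} (hn : 3 ≤ n) :
    ∑ u : Fin n, (if u.1 < 3 then (1:ℝ) else -1) = 6 - n := by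
  obtain ⟨m, rfl⟩ := Nat.exists_eq_add_of_le hn
  rw [Fin.sum_univ_eq_sum_range (fun k => if k < 3 then (1:ℝ) else -1), Finset.sum_range_add]
  simp [Finset.sum_range_succ]
  ring

section Fnsystem

variable {n : ℕ} (h : 0 < n) (Λ M : ℝ)

theorem Fnsystem_sum_bool_roots (p : {p : Fin n × Fin n // p.1 < p.2}) (s t : Fin n) :
    ∑ b, Fnsystem n h Λ M (.inl (p, b)) s * Fnsystem n h Λ M (.inl (p, b)) t =
      if s = t then 2 * ((if s = p.1.1 then 1 else 0) + (if s = p.1.2 then 1 else 0)) else 0 := by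
  simp only [Fintype.sum_bool, Fnsystem]; split_ifs <;> simp_all <;> norm_num

theorem Fnsystem_sum_roots (s t : Fin n) :
    ∑ x, Fnsystem n h Λ M (.inl x) s * Fnsystem n h Λ M (.inl x) t =
      if s = t then 2 * ((n : ℝ) - 1) else 0 := by
  rw [Fintype.sum_prod_type]
  simp only [Fnsystem_sum_bool_roots]
  split_ifs
  · rw [← Finset.mul_sum, sum_pairs_lt_ite_eq_add_ite_eq]
  · simp

theorem Fnsystem_sum_axes (s t : Fin n) :
    ∑ i, Fnsystem n h Λ M (.inr (.inl i)) s * Fnsystem n h Λ M (.inr (.inl i)) t =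
      if s = t then Λ ^ 2 else 0 := by
  by_cases hst : s = t <;> simp [Fnsystem, hst, sq]

theorem Fnsystem_sum_signs (s t : Fin n) :
    ∑ ε, Fnsystem n h Λ M (.inr (.inr ε)) s * Fnsystem n h Λ M (.inr (.inr ε)) t =
      if s = t then 2 ^ (n - 1) * M ^ 2 else 0 := by
  simp only [Fnsystem, mul_mul_mul_comm M, ← sq, ← Finset.mul_sum, sum_sign_mul_sign]
  split_ifs <;> ring

theorem gram_Fnsystem :
    _root_.gram (Fnsystem n h Λ M) = (2 * ((n : ℝ) - 1) + Λ ^ 2 + 2 ^ (n - 1) * M ^ 2) • 1 := by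
  ext s t
  rw [gram_apply_eq_sum, Fintype.sum_sum_type, Fintype.sum_sum_type, Fnsystem_sum_roots,
    Fnsystem_sum_axes, Fnsystem_sum_signs, Matrix.smul_apply, one_apply]
  split_ifs <;> simp [add_assoc]

def blockSigns (b : Bool) : {ε : Fin n → Bool // ε ⟨0, h⟩ = true} :=
  ⟨fun u => decide (u.1 < 3) || b, by simp⟩

@[simp]
theorem Fnsystem_blockSigns_true_apply (u : Fin n) :
    Fnsystem n h Λ M (.inr (.inr (blockSigns h true))) u = M := by
  simp [Fnsystem, blockSigns]

@[simp]
theorem Fnsystem_blockSigns_false_apply (u : Fin n) :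
    Fnsystem n h Λ M (.inr (.inr (blockSigns h false))) u = if u.1 < 3 then M else -M := by
  by_cases hu : u.1 < 3 <;> simp [Fnsystem, blockSigns, hu]

theorem dotProduct_Fnsystem_blockSigns (hn : 3 ≤ n) :
    Fnsystem n h Λ M (.inr (.inr (blockSigns h false))) ⬝ᵥ
      Fnsystem n h Λ M (.inr (.inr (blockSigns h true))) = (6 - n) * M ^ 2 := by
  simp only [dotProduct, Fnsystem_blockSigns_true_apply, Fnsystem_blockSigns_false_apply]
  rw [← sum_ite_lt_three hn, Finset.sum_mul]
  congr! 1 with u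
  split_ifs <;> ring

theorem linearIndependent_Fnsystem_blockSigns (hn : 4 ≤ n) (hM : M ≠ 0) :
    LinearIndependent ℝ ![Fnsystem n h Λ M (.inr (.inr (blockSigns h true))),
      Fnsystem n h Λ M (.inr (.inr (blockSigns h false)))] := by
  refine LinearIndependent.pair_iff.mpr fun a c hac => ?_
  have h0 := congrFun hac ⟨0, h⟩
  have h3 := congrFun hac ⟨3, by omega⟩
  simp only [Pi.add_apply, Pi.smul_apply, smul_eq_mul, Pi.zero_apply,
    Fnsystem_blockSigns_true_apply, Fnsystem_blockSigns_false_apply] at h0 h3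
  norm_num at h0 h3
  have ha : a * M = 0 := by linarith
  have hc : c * M = 0 := by linarith
  exact ⟨(mul_eq_zero.mp ha).resolve_right hM, (mul_eq_zero.mp hc).resolve_right hM⟩

theorem apply_eq_of_mem_span_Fnsystem_blockSigns {v : Fin n → ℝ}
    (hv : v ∈ Submodule.span ℝ {Fnsystem n h Λ M (.inr (.inr (blockSigns h true))),
      Fnsystem n h Λ M (.inr (.inr (blockSigns h false)))})
    {u w : Fin n} (huw : u.1 < 3 ↔ w.1 < 3) : v u = v w := by
  obtain ⟨a, c, rfl⟩ := Submodule.mem_span_pair.mp hv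
  by_cases hu : u.1 < 3 <;> simp [hu, ← huw]

theorem Fnsystem_mem_span_blockSigns (hn : 6 ≤ n) (k)
    (hk : Fnsystem n h Λ M k ∈ Submodule.span ℝ
      {Fnsystem n h Λ M (.inr (.inr (blockSigns h true))),
        Fnsystem n h Λ M (.inr (.inr (blockSigns h false)))}) :
    k = .inr (.inr (blockSigns h true)) ∨ k = .inr (.inr (blockSigns h false)) ∨
      Fnsystem n h Λ M k = 0 := by
  have hconst : ∀ {u w : Fin n}, (u.1 < 3 ↔ w.1 < 3) →
      Fnsystem n h Λ M k u = Fnsystem n h Λ M k w :=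
    apply_eq_of_mem_span_Fnsystem_blockSigns h Λ M hk
  rcases k with ⟨⟨⟨p, q⟩, hpq⟩, b⟩ | i | ε
  · obtain ⟨w, hw, hwp, hwq⟩ := exists_lt_three_iff_ne_ne hn p q
    have := hconst hw.symm
    simp [Fnsystem, hwp, hwq, hpq.ne] at this
  · obtain ⟨w, hw, hwi, -⟩ := exists_lt_three_iff_ne_ne hn i i
    have hΛ : Λ = 0 := by simpa [Fnsystem, hwi] using hconst hw.symm
    right; right; funext u; simp [Fnsystem, hΛ]
  · by_cases hM : M = 0
    · right; right; funext u; simp [Fnsystem, hM]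
    have hε : ∀ {u w : Fin n}, (u.1 < 3 ↔ w.1 < 3) → ε.1 u = ε.1 w := fun {u w} huw => by
      have := hconst huw
      simp only [Fnsystem, mul_right_inj' hM] at this
      revert this
      cases ε.1 u <;> cases ε.1 w <;> norm_num
    have hεb : ε = blockSigns h (ε.1 ⟨3, by omega⟩) := by
      refine Subtype.ext (funext fun u => ?_)
      by_cases hu : u.1 < 3
      · simpa [blockSigns, hu, ε.2] using hε (u := u) (w := ⟨0, h⟩) (by simp [hu])
      · simpa [blockSigns, hu] using hε (u := u) (w := ⟨3, by omega⟩) (by simp [hu])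
    cases hb : ε.1 ⟨3, by omega⟩ <;> rw [hb] at hεb <;> simp [hεb]

end Fnsystem

/-- for `n ≥ 7`, the set `{e_i ± e_j, Λe_i, M(e_1 ± e_2 ± ⋯ ± e_n)}`
in `ℝⁿ` is a ∨-system only if `M = 0`. -/
theorem Fnsystem_isVeeSystem_only_if (n : ℕ) (hn : 7 ≤ n) (Λ M : ℝ) :
    IsVeeSystem (Fnsystem n (by omega) Λ M) → M = 0 := by
  intro hV
  by_contra hM
  have h : 0 < n := by omega
  have hc : 2 * ((n : ℝ) - 1) + Λ ^ 2 + 2 ^ (n - 1) * M ^ 2 ≠ 0 := by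
    have : (1 : ℝ) ≤ n := by exact_mod_cast h
    positivity
  have horth := hV.dotProduct_vee_eq_zero
    (linearIndependent_Fnsystem_blockSigns h Λ M (by omega) hM)
    (Fnsystem_mem_span_blockSigns h Λ M (by omega))
  rw [vee_eq_inv_smul (gram_Fnsystem h Λ M) hc, dotProduct_smul,
    dotProduct_Fnsystem_blockSigns h Λ M (by omega), smul_eq_mul] at horth
  have h6 : (6 - n : ℝ) ≠ 0 := by
    have : (7 : ℝ) ≤ n := by exact_mod_cast hn
    linarith
  simp [hc, h6, hM] at horth
end
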